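/- Let V be a finite Borel measure on (0,∞) and c ∈ (0, 𝓛_V(0)). Then 𝓛_V(τ_V(c)) ≥ c/(1+c), and for every s > 0 one has 𝓛_V(τ_V(c) + s) ≤ c + (τ_V(c) + s) / (s · e^{s·λ_V(c)}). -/

import Mathlib

open MeasureTheory Filter Set Topology

/-- The Laplace transform `𝓛_V(t) = ∫_{(0,∞)} e^{-tλ} dV(λ)` of a (finite Borel) measure `V`
on `(0,∞)`. -/
noncomputable def lap (V : Measure ℝ) (t : ℝ) : ℝ :=
  ∫ x in Ioi (0 : ℝ), Real.exp (-t * x) ∂V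

/-- `V(λ) = V((0,λ])`, the nondecreasing right-continuous function associated to `V`. -/
noncomputable def cdfV (V : Measure ℝ) (l : ℝ) : ℝ :=
  (V (Ioc 0 l)).toReal

/-- The mixing time `T_V(ε) = min{t ≥ 0 : 𝓛_V(t) ≤ ε}`. -/
noncomputable def TmixV (V : Measure ℝ) (ε : ℝ) : ℝ :=
  sInf {t : ℝ | 0 ≤ t ∧ lap V t ≤ ε}

/-- `λ_V(c) = inf{λ > 0 : V(λ) > c}`. -/
noncomputable def lamV (V : Measure ℝ) (c : ℝ) : ℝ :=
  sInf {l : ℝ | 0 < l ∧ c < cdfV V l}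

/-- `τ_V(c) = sup_{λ ≥ λ_V(c)} log(1 + V(λ))/λ`. -/
noncomputable def tauV (V : Measure ℝ) (c : ℝ) : ℝ :=
  sSup ((fun l => Real.log (1 + cdfV V l) / l) '' Ici (lamV V c))

/-- `t` is a cutoff time for the sequence of Laplace transforms `(𝓛_{V_n})` (in the regime
`𝓛_{V_n}(0) → ∞`): `𝓛_{V_n}(a t_n) → 0` for `a > 1` and `𝓛_{V_n}(a t_n) → ∞` for `0 < a < 1`. -/
def IsLapCutoffTime (V : ℕ → Measure ℝ) (t : ℕ → ℝ) : Prop :=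
  (∀ᶠ n in atTop, 0 < t n) ∧
    (∀ a : ℝ, 1 < a → Tendsto (fun n => lap (V n) (a * t n)) atTop (𝓝 0)) ∧
    (∀ a : ℝ, a ∈ Ioo (0 : ℝ) 1 → Tendsto (fun n => lap (V n) (a * t n)) atTop atTop)

/-- The sequence of Laplace transforms `(𝓛_{V_n})` has a cutoff. -/
def LapCutoff (V : ℕ → Measure ℝ) : Prop :=
  ∃ t : ℕ → ℝ, IsLapCutoffTime V t

/-!
Write `F = cdfV V`, `λ = lamV V c` and `τ = tauV V c`. Right-continuity of `F` gives `F ≥ c` on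
`[λ, ∞)`, and `τ` is the least exponent with `1 + F l ≤ exp (τ l)` for all `l ≥ λ`. Choosing
`l ≥ λ` with `τ l` almost equal to `log (1 + F l)` gives
`𝓛(τ) ≥ exp (-τ l) F l ≈ F l / (1 + F l) ≥ c / (1 + c)`.
For the upper bound at `t = τ + s`, the mass of `(0, λ)` is at most `c`, while Tonelli turns the
integral over `[λ, ∞)` into `∫_{u > λ} t exp (-t u) V [λ, u) du ≤ ∫_{u > λ} t exp (-s u) du`.
-/

open Real

lemma exists_mul_lt_add_of_forall_lt_exists_lt_div {g : ℝ → ℝ} {a A τ η : ℝ} (ha : 0 < a)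
    (hA : 0 ≤ A) (hg : ∀ l ≥ a, g l ≤ A) (hτ : 0 < τ) (hη : 0 < η)
    (happrox : ∀ r < τ, ∃ l ≥ a, r < g l / l) : ∃ l ≥ a, τ * l < g l + η := by
  -- `θ` is chosen so that `(1 / θ - 1) * A < η`.
  set θ := (A + η / 2) / (A + η)
  have hθ0 : 0 < θ := by positivity
  have hθ1 : θ < 1 := (div_lt_one (by positivity)).2 (by linarith)
  obtain ⟨l, hla, hl⟩ := happrox (θ * τ) (mul_lt_of_lt_one_left hτ hθ1)
  have hl0 : 0 < l := ha.trans_le hla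
  have hgl : θ * τ * l < g l := (lt_div_iff₀ hl0).1 hl
  rw [mul_assoc, ← lt_div_iff₀' hθ0, div_div_eq_mul_div] at hgl
  refine ⟨l, hla, hgl.trans_le ?_⟩
  rw [div_le_iff₀ (by positivity)]
  nlinarith [hg l hla]

lemma lintegral_Ioi_ofReal_exp_neg_mul {b : ℝ} (hb : 0 < b) (a : ℝ) :
    ∫⁻ u in Ioi a, ENNReal.ofReal (exp (-b * u)) = ENNReal.ofReal (exp (-b * a) / b) := by
  rw [← ofReal_integral_eq_lintegral_ofReal (exp_neg_integrableOn_Ioi a hb)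
    (ae_of_all _ fun _ => (exp_pos _).le), integral_exp_mul_Ioi (neg_lt_zero.2 hb), neg_div_neg_eq]

lemma lintegral_ofReal_exp_neg_mul_eq {ν : Measure ℝ} [SFinite ν] {t : ℝ} (ht : 0 < t) :
    ∫⁻ x, ENNReal.ofReal (exp (-t * x)) ∂ν =
      ∫⁻ u, ENNReal.ofReal (t * exp (-t * u)) * ν (Iio u) := by
  set C : ℝ → ENNReal := fun u => ENNReal.ofReal (t * exp (-t * u))
  have hC : Measurable C := by fun_prop
  have hinner (x : ℝ) : ENNReal.ofReal (exp (-t * x)) = ∫⁻ u, (Ioi x).indicator C u := by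
    simp only [C, lintegral_indicator measurableSet_Ioi, ENNReal.ofReal_mul ht.le]
    rw [lintegral_const_mul _ (by fun_prop), lintegral_Ioi_ofReal_exp_neg_mul ht,
      ← ENNReal.ofReal_mul ht.le, mul_div_cancel₀ _ ht.ne']
  have hswap (u x : ℝ) : (Ioi x).indicator C u = (Iio u).indicator (fun _ => C u) x := by
    simp only [indicator_apply, mem_Ioi, mem_Iio]
  have hmeas :
      AEMeasurable (Function.uncurry fun x u => (Ioi x).indicator C u) (ν.prod volume) :=
    ((hC.comp measurable_snd).indicator
      (measurableSet_lt measurable_fst measurable_snd)).aemeasurable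
  simp_rw [hinner]
  rw [lintegral_lintegral_swap hmeas]
  simp_rw [hswap, lintegral_indicator_const measurableSet_Iio]
  rfl

lemma setIntegral_Ici_exp_neg_mul_le {μ : Measure ℝ} [SFinite μ] {a τ s : ℝ} (hτ : 0 ≤ τ)
    (hs : 0 < s) (hμ : ∀ u, a < u → μ (Ico a u) ≤ ENNReal.ofReal (exp (τ * u))) :
    ∫ x in Ici a, exp (-(τ + s) * x) ∂μ ≤ (τ + s) / (s * exp (s * a)) := by
  set t := τ + s
  have ht : 0 < t := by positivity
  have hpointwise (u : ℝ) : ENNReal.ofReal (t * exp (-t * u)) * μ.restrict (Ici a) (Iio u) ≤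
      (Ioi a).indicator (fun u => ENNReal.ofReal (t * exp (-s * u))) u := by
    rw [Measure.restrict_apply measurableSet_Iio, inter_comm, Ici_inter_Iio]
    by_cases hu : a < u
    · rw [indicator_of_mem (mem_Ioi.2 hu)]
      calc ENNReal.ofReal (t * exp (-t * u)) * μ (Ico a u)
          ≤ ENNReal.ofReal (t * exp (-t * u)) * ENNReal.ofReal (exp (τ * u)) := by
            gcongr; exact hμ u hu
        _ = ENNReal.ofReal (t * exp (-s * u)) := by
            rw [← ENNReal.ofReal_mul (by positivity), mul_assoc, ← exp_add]
            congr 3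
            simp only [t]
            ring
    · rw [Ico_eq_empty hu, measure_empty, mul_zero]
      exact bot_le
  have key : ∫⁻ x in Ici a, ENNReal.ofReal (exp (-t * x)) ∂μ ≤
      ENNReal.ofReal (t / (s * exp (s * a))) := calc
    _ = ∫⁻ u, ENNReal.ofReal (t * exp (-t * u)) * μ.restrict (Ici a) (Iio u) :=
        lintegral_ofReal_exp_neg_mul_eq ht
    _ ≤ ∫⁻ u in Ioi a, ENNReal.ofReal (t * exp (-s * u)) := by
        rw [← lintegral_indicator measurableSet_Ioi]
        exact lintegral_mono hpointwise
    _ = ENNReal.ofReal (t / (s * exp (s * a))) := by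
        simp_rw [ENNReal.ofReal_mul ht.le]
        rw [lintegral_const_mul _ (by fun_prop), lintegral_Ioi_ofReal_exp_neg_mul hs,
          ← ENNReal.ofReal_mul ht.le, neg_mul, exp_neg]
        congr 1
        field_simp
  rw [integral_eq_lintegral_of_nonneg_ae (ae_of_all _ fun _ => (exp_pos _).le) (by fun_prop)]
  exact ENNReal.toReal_le_of_le_ofReal (by positivity) key

section

variable {V : Measure ℝ} {c : ℝ}

lemma cdfV_nonneg (l : ℝ) : 0 ≤ cdfV V l := ENNReal.toReal_nonneg

lemma cdfV_of_nonpos {l : ℝ} (hl : l ≤ 0) : cdfV V l = 0 := by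
  simp [cdfV, Ioc_eq_empty_of_le hl]

lemma lap_zero : lap V 0 = V.real (Ioi 0) := by
  simp [lap, measureReal_def]

lemma cdfV_le_of_lt_lamV {l : ℝ} (hl0 : 0 < l) (hl : l < lamV V c) : cdfV V l ≤ c :=
  le_of_not_gt fun h =>
    (csInf_le (s := {l | 0 < l ∧ c < cdfV V l}) ⟨0, fun _ hm => hm.1.le⟩ ⟨hl0, h⟩).not_gt hl

variable [IsFiniteMeasure V]

lemma cdfV_mono : Monotone (cdfV V) := fun _ _ h =>
  measureReal_mono (Ioc_subset_Ioc_right h)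

lemma cdfV_le_measureReal_univ (l : ℝ) : cdfV V l ≤ V.real univ :=
  measureReal_mono (subset_univ _)

lemma tendsto_cdfV_atTop : Tendsto (cdfV V) atTop (𝓝 (lap V 0)) := by
  have h := tendsto_measure_iUnion_atTop (μ := V) (s := Ioc (0 : ℝ))
    fun _ _ h => Ioc_subset_Ioc_right h
  rw [iUnion_Ioc_right] at h
  rw [lap_zero, measureReal_def]
  exact (ENNReal.tendsto_toReal (measure_ne_top V _)).comp h

lemma tendsto_cdfV_nhdsGT (l : ℝ) : Tendsto (cdfV V) (𝓝[>] l) (𝓝 (cdfV V l)) := by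
  have hinter : ⋂ r > l, Ioc (0 : ℝ) r = Ioc 0 l := by
    ext x
    simp only [mem_iInter, mem_Ioc]
    exact ⟨fun h => ⟨(h (l + 1) (by linarith)).1,
      le_of_forall_gt_imp_ge_of_dense fun r hr => (h r hr).2⟩,
      fun h r hr => ⟨h.1, h.2.trans hr.le⟩⟩
  have h := tendsto_measure_biInter_gt (μ := V) (s := Ioc 0) (a := l)
    (fun _ _ => measurableSet_Ioc.nullMeasurableSet)
    (fun _ _ _ h => Ioc_subset_Ioc_right h) ⟨l + 1, by linarith, measure_ne_top V _⟩
  rw [hinter] at h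
  exact (ENNReal.tendsto_toReal (measure_ne_top V _)).comp h

lemma measureReal_Ioo_le_of_forall_cdfV_le {b : ℝ} (hb : 0 < b) {m : ℝ} (hm : 0 ≤ m)
    (h : ∀ l ∈ Ioo 0 b, cdfV V l ≤ m) : V.real (Ioo 0 b) ≤ m := by
  obtain ⟨u, hu_mono, hu_mem, hu_lim⟩ := exists_seq_strictMono_tendsto' hb
  have hunion : ⋃ n, Ioc 0 (u n) = Ioo 0 b := by
    rw [← Ioi_inter_Iio, ← iUnion_Iic_eq_Iio_of_lt_of_tendsto (fun n => (hu_mem n).2) hu_lim,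
      inter_iUnion]
    rfl
  rw [measureReal_def, ← hunion,
    Monotone.measure_iUnion fun _ _ h => Ioc_subset_Ioc_right (hu_mono.monotone h)]
  refine ENNReal.toReal_le_of_le_ofReal hm (iSup_le fun n => ?_)
  exact ENNReal.le_ofReal_iff_toReal_le (measure_ne_top V _) hm |>.mpr (h _ (hu_mem n))

lemma exists_lt_cdfV (hclt : c < lap V 0) : ∃ l, 0 < l ∧ c < cdfV V l :=
  ((tendsto_cdfV_atTop.eventually (lt_mem_nhds hclt)).and (eventually_gt_atTop 0)).exists.imp
    fun _ h => ⟨h.2, h.1⟩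

lemma lamV_pos (hc : 0 < c) (hclt : c < lap V 0) : 0 < lamV V c := by
  have hsmall : ∀ᶠ δ in 𝓝[>] 0, cdfV V δ < c := by
    refine (tendsto_cdfV_nhdsGT 0).eventually (gt_mem_nhds ?_)
    rwa [cdfV_of_nonpos le_rfl]
  obtain ⟨δ, hδc, hδ0⟩ := (hsmall.and self_mem_nhdsWithin).exists
  exact lt_of_lt_of_le hδ0 <| le_csInf (exists_lt_cdfV hclt) fun l hl =>
    le_of_not_gt fun hlδ => (hl.2.trans_le (cdfV_mono hlδ.le)).not_gt hδc

lemma lt_cdfV_of_lamV_lt (hclt : c < lap V 0) {l : ℝ} (hl : lamV V c < l) : c < cdfV V l := by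
  obtain ⟨m, hm, hml⟩ := exists_lt_of_csInf_lt (exists_lt_cdfV hclt) hl
  exact hm.2.trans_le (cdfV_mono hml.le)

lemma le_cdfV_of_lamV_le (hclt : c < lap V 0) {l : ℝ} (hl : lamV V c ≤ l) : c ≤ cdfV V l := by
  have hlam : c ≤ cdfV V (lamV V c) := ge_of_tendsto (tendsto_cdfV_nhdsGT _)
    (eventually_nhdsWithin_of_forall fun _ hl => (lt_cdfV_of_lamV_lt hclt hl).le)
  exact hlam.trans (cdfV_mono hl)

lemma measureReal_Ioo_lamV_le (hc : 0 < c) (hclt : c < lap V 0) :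
    V.real (Ioo 0 (lamV V c)) ≤ c :=
  measureReal_Ioo_le_of_forall_cdfV_le (lamV_pos hc hclt) hc.le
    fun _ hl => cdfV_le_of_lt_lamV hl.1 hl.2

lemma bddAbove_tauV (hlam : 0 < lamV V c) :
    BddAbove ((fun l => log (1 + cdfV V l) / l) '' Ici (lamV V c)) := by
  refine ⟨log (1 + V.real univ) / lamV V c, ?_⟩
  rintro _ ⟨l, hl, rfl⟩
  have hlog : 0 ≤ log (1 + cdfV V l) := log_nonneg (by linarith [cdfV_nonneg (V := V) l])
  calc log (1 + cdfV V l) / l ≤ log (1 + cdfV V l) / lamV V c := by gcongr; exact hl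
    _ ≤ log (1 + V.real univ) / lamV V c := by
      gcongr
      · linarith [cdfV_nonneg (V := V) l]
      · exact cdfV_le_measureReal_univ l

lemma log_div_le_tauV (hlam : 0 < lamV V c) {l : ℝ} (hl : lamV V c ≤ l) :
    log (1 + cdfV V l) / l ≤ tauV V c :=
  le_csSup (bddAbove_tauV hlam) ⟨l, hl, rfl⟩

lemma tauV_pos (hc : 0 < c) (hclt : c < lap V 0) : 0 < tauV V c := by
  have hlam := lamV_pos hc hclt
  have hcdf := le_cdfV_of_lamV_le hclt le_rfl
  have hlog : 0 < log (1 + cdfV V (lamV V c)) := log_pos (by linarith)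
  exact (div_pos hlog hlam).trans_le (log_div_le_tauV hlam le_rfl)

lemma measure_Ico_lamV_le (hc : 0 < c) (hclt : c < lap V 0) {u : ℝ} (hu : lamV V c < u) :
    V (Ico (lamV V c) u) ≤ ENNReal.ofReal (exp (tauV V c * u)) := by
  have hlam := lamV_pos hc hclt
  have hu0 : 0 < u := hlam.trans hu
  have hcdf : 1 + cdfV V u ≤ exp (tauV V c * u) := by
    rw [← log_le_iff_le_exp (by linarith [cdfV_nonneg (V := V) u]), ← div_le_iff₀ hu0]
    exact log_div_le_tauV hlam hu.le
  calc V (Ico (lamV V c) u) ≤ V (Ioc 0 u) :=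
        measure_mono fun x hx => ⟨hlam.trans_le hx.1, hx.2.le⟩
    _ = ENNReal.ofReal (cdfV V u) := (ENNReal.ofReal_toReal (measure_ne_top V _)).symm
    _ ≤ ENNReal.ofReal (exp (tauV V c * u)) := ENNReal.ofReal_le_ofReal (by linarith)

lemma exists_tauV_mul_lt_log_add (hc : 0 < c) (hclt : c < lap V 0) {η : ℝ} (hη : 0 < η) :
    ∃ l ≥ lamV V c, tauV V c * l < log (1 + cdfV V l) + η := by
  have hlam := lamV_pos hc hclt
  refine exists_mul_lt_add_of_forall_lt_exists_lt_div (g := fun l => log (1 + cdfV V l))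
    (A := log (1 + V.real univ)) hlam
    (log_nonneg (by linarith [measureReal_nonneg (μ := V) (s := univ)]))
    (fun l _ => log_le_log (by linarith [cdfV_nonneg (V := V) l])
      (by linarith [cdfV_le_measureReal_univ (V := V) l]))
    (tauV_pos hc hclt) hη fun r hr => ?_
  obtain ⟨_, ⟨l, hl, rfl⟩, hlt⟩ := exists_lt_of_lt_csSup (nonempty_Ici.image _) hr
  exact ⟨l, hl, hlt⟩

lemma integrableOn_Ioi_exp_neg_mul {t : ℝ} (ht : 0 ≤ t) :
    IntegrableOn (fun x => exp (-t * x)) (Ioi 0) V := by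
  refine Measure.integrableOn_of_bounded (M := 1) (measure_ne_top V _) (by fun_prop)
    (ae_restrict_of_forall_mem measurableSet_Ioi fun x hx => ?_)
  rw [norm_of_nonneg (exp_pos _).le, exp_le_one_iff]
  nlinarith [mem_Ioi.1 hx]

lemma exp_neg_mul_mul_cdfV_le_lap {t : ℝ} (ht : 0 ≤ t) (l : ℝ) :
    exp (-(t * l)) * cdfV V l ≤ lap V t := by
  have hint := integrableOn_Ioi_exp_neg_mul (V := V) ht
  calc exp (-(t * l)) * cdfV V l = ∫ _ in Ioc 0 l, exp (-(t * l)) ∂V := by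
        rw [setIntegral_const, smul_eq_mul, mul_comm]; rfl
    _ ≤ ∫ x in Ioc 0 l, exp (-t * x) ∂V :=
        setIntegral_mono_on (integrableOn_const (measure_ne_top V _))
          (hint.mono_set Ioc_subset_Ioi_self) measurableSet_Ioc
          fun x hx => exp_le_exp.2 (by nlinarith [hx.2])
    _ ≤ lap V t := setIntegral_mono_set hint (ae_of_all _ fun _ => (exp_pos _).le)
        Ioc_subset_Ioi_self.eventuallyLE

lemma div_one_add_le_lap_tauV (hc : 0 < c) (hclt : c < lap V 0) :
    c / (1 + c) ≤ lap V (tauV V c) := by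
  have key : ∀ η > 0, exp (-η) * (c / (1 + c)) ≤ lap V (tauV V c) := by
    intro η hη
    obtain ⟨l, hl, hlt⟩ := exists_tauV_mul_lt_log_add hc hclt hη
    set F := cdfV V l
    have hcF : c ≤ F := le_cdfV_of_lamV_le hclt hl
    have hF : 0 ≤ F := cdfV_nonneg l
    have hratio : c / (1 + c) ≤ F / (1 + F) := by
      rw [div_le_div_iff₀ (by positivity) (by positivity)]
      nlinarith
    calc exp (-η) * (c / (1 + c)) ≤ exp (-η) * (F / (1 + F)) := by gcongr
      _ = exp (-(log (1 + F) + η)) * F := by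
          rw [neg_add, exp_add, exp_neg (log _), exp_log (by positivity)]
          field_simp
      _ ≤ exp (-(tauV V c * l)) * F := by gcongr
      _ ≤ lap V (tauV V c) := exp_neg_mul_mul_cdfV_le_lap (tauV_pos hc hclt).le l
  have hlim : Tendsto (fun η => exp (-η) * (c / (1 + c))) (𝓝[>] 0) (𝓝 (c / (1 + c))) := by
    refine Tendsto.mono_left ?_ nhdsWithin_le_nhds
    exact (by fun_prop : Continuous fun η => exp (-η) * (c / (1 + c))).tendsto' 0 _ (by simp)
  exact le_of_tendsto hlim (eventually_nhdsWithin_of_forall key)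

lemma lap_eq_setIntegral_Ioo_add_setIntegral_Ici {a t : ℝ} (ha : 0 < a) (ht : 0 ≤ t) :
    lap V t = ∫ x in Ioo 0 a, exp (-t * x) ∂V + ∫ x in Ici a, exp (-t * x) ∂V := by
  have hint := integrableOn_Ioi_exp_neg_mul (V := V) ht
  rw [← Ioo_union_Ici_eq_Ioi ha] at hint
  rw [lap, ← Ioo_union_Ici_eq_Ioi ha]
  exact setIntegral_union ((Iio_disjoint_Ici le_rfl).mono_left Ioo_subset_Iio_self)
    measurableSet_Ici
    (hint.mono_set subset_union_left) (hint.mono_set subset_union_right)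

lemma setIntegral_Ioo_exp_neg_mul_le {a t : ℝ} (ht : 0 ≤ t) :
    ∫ x in Ioo 0 a, exp (-t * x) ∂V ≤ V.real (Ioo 0 a) := calc
  _ ≤ ∫ _ in Ioo 0 a, (1 : ℝ) ∂V :=
      setIntegral_mono_on ((integrableOn_Ioi_exp_neg_mul ht).mono_set Ioo_subset_Ioi_self)
        (integrableOn_const (measure_ne_top V _)) measurableSet_Ioo
        fun x hx => exp_le_one_iff.2 (by nlinarith [hx.1])
  _ = V.real (Ioo 0 a) := by simp

end

theorem stmt_7_general (V : Measure ℝ) [IsFiniteMeasure V]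
    (c : ℝ) (hc : 0 < c) (hclt : c < lap V 0) :
    c / (1 + c) ≤ lap V (tauV V c) ∧
      ∀ s > (0 : ℝ),
        lap V (tauV V c + s) ≤ c + (tauV V c + s) / (s * Real.exp (s * lamV V c)) := by
  refine ⟨div_one_add_le_lap_tauV hc hclt, fun s hs => ?_⟩
  have hτ := (tauV_pos hc hclt).le
  rw [lap_eq_setIntegral_Ioo_add_setIntegral_Ici (lamV_pos hc hclt) (by positivity)]
  gcongr ?_ + ?_
  · exact (setIntegral_Ioo_exp_neg_mul_le (by positivity)).trans (measureReal_Ioo_lamV_le hc hclt)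
  · exact setIntegral_Ici_exp_neg_mul_le hτ hs fun u hu => measure_Ico_lamV_le hc hclt hu

theorem stmt_7 (V : Measure ℝ) [IsFiniteMeasure V] (hsupp : V (Iic 0) = 0)
    (c : ℝ) (hc : 0 < c) (hclt : c < lap V 0) :
    c / (1 + c) ≤ lap V (tauV V c) ∧
      ∀ s > (0 : ℝ),
        lap V (tauV V c + s) ≤ c + (tauV V c + s) / (s * Real.exp (s * lamV V c)) :=
  stmt_7_general V c hc hclt
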